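/- arXiv:2503.05267 — 3 statements merged into one kernel-verified Lean document; each statement's English description precedes it below -/
import Mathlib

section
/- Coercivity and boundedness of the evolving Steklov–Poincaré operators: define S_i : Z → Z* by ⟨S_iη, μ⟩ = a_i(F_iη, F_iμ). Then S_i is bounded, |⟨S_iη,μ⟩| ≤ C‖η‖_Z‖μ‖_Z, and coercive, ⟨S_iη, η⟩ ≥ c‖η‖²_Z for all η ∈ Z; consequently S_i and S = S₁ + S₂ are isomorphisms Z → Z*. -/
/-!
Pulling the bounded form `a_i` back along the bounded maps `F_i` and `ι_i ∘ F_i` gives a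
continuous bilinear form `S_i` on `Z`, so boundedness is just `‖S_i‖ < ∞`. Coercivity comes from
the left inverse: `‖η‖ = ‖T_i F_i η‖ ≤ ‖T_i‖ C_F N_i(F_i η)`, so the coercivity of `a_i` in the
seminorm `N_i` becomes coercivity of `S_i` in the norm of `Z`. Adding the nonnegative form `S₂`
keeps `S₁` coercive, and Lax–Milgram with the Riesz representation of `Z*` gives the isomorphisms.
-/

open InnerProductSpace

theorem IsCoercive.existsUnique_forall_apply_eq {V : Type*} [NormedAddCommGroup V]
    [InnerProductSpace ℝ V] [CompleteSpace V] {B : V →L[ℝ] V →L[ℝ] ℝ} (hB : IsCoercive B)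
    (χ : V →L[ℝ] ℝ) : ∃! v, ∀ w, B v w = χ w := by
  have hB_eq : (fun v => B v) = toDual ℝ V ∘ hB.continuousLinearEquivOfBilin := by
    ext v w
    simp
  have hbij : Function.Bijective fun v => B v := by
    rw [hB_eq]
    exact (toDual ℝ V).bijective.comp hB.continuousLinearEquivOfBilin.bijective
  simpa only [ContinuousLinearMap.ext_iff] using hbij.existsUnique χ

theorem IsCoercive.add_of_nonneg {E : Type*} [SeminormedAddCommGroup E] [NormedSpace ℝ E]
    {B B' : E →L[ℝ] E →L[ℝ] ℝ} (hB : IsCoercive B) (hB' : ∀ u, 0 ≤ B' u u) :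
    IsCoercive (B + B') := by
  obtain ⟨c, hc, hcB⟩ := hB
  exact ⟨c, hc, fun u => (hcB u).trans (by simpa using hB' u)⟩

theorem isCoercive_of_norm_le {E : Type*} [SeminormedAddCommGroup E] [NormedSpace ℝ E]
    {B : E →L[ℝ] E →L[ℝ] ℝ} (N : E → ℝ) {c K : ℝ} (hc : 0 < c) (hK : 0 < K)
    (hN : ∀ u, ‖u‖ ≤ K * N u) (hB : ∀ u, c * N u ^ 2 ≤ B u u) : IsCoercive B := by
  refine ⟨c / K ^ 2, by positivity, fun u => ?_⟩
  have hsq : ‖u‖ ^ 2 ≤ (K * N u) ^ 2 := pow_le_pow_left₀ (norm_nonneg u) (hN u) 2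
  calc c / K ^ 2 * ‖u‖ * ‖u‖ = c / K ^ 2 * ‖u‖ ^ 2 := by ring
    _ ≤ c / K ^ 2 * (K * N u) ^ 2 := by gcongr
    _ = c * N u ^ 2 := by field_simp
    _ ≤ B u u := hB u

theorem exists_pos_norm_le_of_leftInverse {Z W : Type*} [SeminormedAddCommGroup Z]
    [NormedSpace ℝ Z] [SeminormedAddCommGroup W] [NormedSpace ℝ W] {F : Z →L[ℝ] W}
    {T : W →L[ℝ] Z} (hTF : ∀ η, T (F η) = η) {N : W → ℝ} {CF : ℝ} (hCF : 0 < CF)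
    (hF : ∀ η, ‖F η‖ ≤ CF * N (F η)) : ∃ K, 0 < K ∧ ∀ η, ‖η‖ ≤ K * N (F η) := by
  refine ⟨(‖T‖ + 1) * CF, by positivity, fun η => ?_⟩
  calc ‖η‖ = ‖T (F η)‖ := by rw [hTF]
    _ ≤ ‖T‖ * ‖F η‖ := T.le_opNorm _
    _ ≤ (‖T‖ + 1) * ‖F η‖ := by gcongr; linarith
    _ ≤ (‖T‖ + 1) * (CF * N (F η)) := by gcongr; exact hF η
    _ = (‖T‖ + 1) * CF * N (F η) := by ring

theorem isCoercive_bilinearComp_of_leftInverse {Z W W' : Type*} [SeminormedAddCommGroup Z]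
    [NormedSpace ℝ Z] [SeminormedAddCommGroup W] [NormedSpace ℝ W]
    [SeminormedAddCommGroup W'] [NormedSpace ℝ W'] (A : W →L[ℝ] W' →L[ℝ] ℝ) (ι : W →L[ℝ] W')
    {F : Z →L[ℝ] W} {T : W →L[ℝ] Z} (hTF : ∀ η, T (F η) = η) {N : W → ℝ} {c CF : ℝ}
    (hc : 0 < c) (hCF : 0 < CF) (hA : ∀ u, c * N u ^ 2 ≤ A u (ι u))
    (hF : ∀ η, ‖F η‖ ≤ CF * N (F η)) : IsCoercive (A.bilinearComp F (ι.comp F)) := by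
  obtain ⟨K, hK, hNK⟩ := exists_pos_norm_le_of_leftInverse hTF hCF hF
  exact isCoercive_of_norm_le (N ∘ F) hc hK hNK fun η => hA (F η)

theorem ContinuousLinearMap.abs_apply_apply_le {E F : Type*} [SeminormedAddCommGroup E]
    [NormedSpace ℝ E] [SeminormedAddCommGroup F] [NormedSpace ℝ F] {B : E →L[ℝ] F →L[ℝ] ℝ}
    {C : ℝ} (hC : ‖B‖ ≤ C) (x : E) (y : F) : |B x y| ≤ C * ‖x‖ * ‖y‖ := by
  rw [← Real.norm_eq_abs]
  exact (B.le_opNorm₂ x y).trans (by gcongr)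

/-- `a_i (F_i η) (ι_i (F_i μ))` is `⟨S_i η, μ⟩`, with `N_i` the `L²_{H¹(Ω_i)}` seminorm and
`ι_i : W_i → W̃_i` the embedding of trial into test functions; `S_i` being an isomorphism
`Z → Z*` is stated as unique solvability of `⟨S_i η, ·⟩ = χ` for every `χ ∈ Z*`. -/
theorem stmt_15_general {Z W1 W2 W1' W2' : Type*}
    [NormedAddCommGroup Z] [InnerProductSpace ℝ Z] [CompleteSpace Z]
    [NormedAddCommGroup W1] [NormedSpace ℝ W1]
    [NormedAddCommGroup W2] [NormedSpace ℝ W2]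
    [NormedAddCommGroup W1'] [NormedSpace ℝ W1']
    [NormedAddCommGroup W2'] [NormedSpace ℝ W2']
    (a1 : W1 →ₗ[ℝ] W1' →ₗ[ℝ] ℝ) (a2 : W2 →ₗ[ℝ] W2' →ₗ[ℝ] ℝ)
    (ι1 : W1 →L[ℝ] W1') (ι2 : W2 →L[ℝ] W2')
    (F1 : Z →L[ℝ] W1) (F2 : Z →L[ℝ] W2)
    (T1 : W1 →L[ℝ] Z) (T2 : W2 →L[ℝ] Z)
    (hT1 : ∀ η : Z, T1 (F1 η) = η) (hT2 : ∀ η : Z, T2 (F2 η) = η)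
    (N1 : W1 → ℝ) (N2 : W2 → ℝ)
    {Ca c' CF : ℝ} (hc' : 0 < c') (hCF : 0 < CF)
    (hbd1 : ∀ (u : W1) (v : W1'), |a1 u v| ≤ Ca * ‖u‖ * ‖v‖)
    (hbd2 : ∀ (u : W2) (v : W2'), |a2 u v| ≤ Ca * ‖u‖ * ‖v‖)
    (hcoer1 : ∀ u : W1, c' * (N1 u) ^ 2 ≤ a1 u (ι1 u))
    (hcoer2 : ∀ u : W2, c' * (N2 u) ^ 2 ≤ a2 u (ι2 u))
    (hF1 : ∀ η : Z, ‖F1 η‖ ≤ CF * N1 (F1 η))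
    (hF2 : ∀ η : Z, ‖F2 η‖ ≤ CF * N2 (F2 η)) :
    (∃ C : ℝ, 0 < C ∧ ∀ η μ : Z,
        |a1 (F1 η) (ι1 (F1 μ))| ≤ C * ‖η‖ * ‖μ‖ ∧
        |a2 (F2 η) (ι2 (F2 μ))| ≤ C * ‖η‖ * ‖μ‖) ∧
    (∃ c : ℝ, 0 < c ∧ ∀ η : Z,
        c * ‖η‖ ^ 2 ≤ a1 (F1 η) (ι1 (F1 η)) ∧
        c * ‖η‖ ^ 2 ≤ a2 (F2 η) (ι2 (F2 η))) ∧
    (∀ χ : Z →L[ℝ] ℝ,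
        (∃! η : Z, ∀ μ : Z, a1 (F1 η) (ι1 (F1 μ)) = χ μ) ∧
        (∃! η : Z, ∀ μ : Z, a2 (F2 η) (ι2 (F2 μ)) = χ μ) ∧
        (∃! η : Z, ∀ μ : Z, a1 (F1 η) (ι1 (F1 μ)) + a2 (F2 η) (ι2 (F2 μ)) = χ μ)) := by
  let A1 := a1.mkContinuous₂ Ca fun u v => hbd1 u v
  let A2 := a2.mkContinuous₂ Ca fun u v => hbd2 u v
  let S1 := A1.bilinearComp F1 (ι1.comp F1)
  let S2 := A2.bilinearComp F2 (ι2.comp F2)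
  have hS1 : IsCoercive S1 := isCoercive_bilinearComp_of_leftInverse A1 ι1 hT1 hc' hCF hcoer1 hF1
  have hS2 : IsCoercive S2 := isCoercive_bilinearComp_of_leftInverse A2 ι2 hT2 hc' hCF hcoer2 hF2
  obtain ⟨c1, hc1, hS1c⟩ := id hS1
  obtain ⟨c2, hc2, hS2c⟩ := id hS2
  have hmin_le {c : ℝ} (hc : min c1 c2 ≤ c) (η : Z) : min c1 c2 * ‖η‖ ^ 2 ≤ c * ‖η‖ * ‖η‖ := by
    rw [mul_assoc, ← sq]; gcongr
  refine ⟨⟨‖S1‖ + ‖S2‖ + 1, by positivity, fun η μ => ⟨?_, ?_⟩⟩,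
    ⟨min c1 c2, lt_min hc1 hc2, fun η => ⟨?_, ?_⟩⟩, fun χ => ⟨?_, ?_, ?_⟩⟩
  · exact S1.abs_apply_apply_le (by linarith [norm_nonneg S2]) η μ
  · exact S2.abs_apply_apply_le (by linarith [norm_nonneg S1]) η μ
  · exact (hmin_le (min_le_left _ _) η).trans (hS1c η)
  · exact (hmin_le (min_le_right _ _) η).trans (hS2c η)
  · exact hS1.existsUnique_forall_apply_eq χ
  · exact hS2.existsUnique_forall_apply_eq χ
  · have hS2_nonneg (η : Z) : 0 ≤ S2 η η := le_trans (by positivity) (hS2c η)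
    exact (hS1.add_of_nonneg hS2_nonneg).existsUnique_forall_apply_eq χ

/-- The evolving Steklov–Poincaré operators
`⟨S_iη, μ⟩ = a_i(F_iη, F_iμ)` are bounded and coercive on the interface space `Z`, and
consequently `S₁`, `S₂` and `S = S₁ + S₂` are isomorphisms `Z → Z*` (expressed as unique
solvability of `⟨S η, ·⟩ = χ` for every `χ ∈ Z*`).  The hypotheses encode: boundedness of
`a_i : W_i × W̃_i → ℝ`, coercivity `a_i(u,u) ≥ c' N_i(u)²` in the `L²_{H¹(Ω_i)}`-seminorm
`N_i`, the trace identity `T_i F_i η = η`, and the a priori bound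
`‖F_iη‖ ≤ C_F N_i(F_iη)`. -/
theorem stmt_15 {Z W1 W2 W1' W2' : Type*}
    [NormedAddCommGroup Z] [InnerProductSpace ℝ Z] [CompleteSpace Z]
    [NormedAddCommGroup W1] [NormedSpace ℝ W1]
    [NormedAddCommGroup W2] [NormedSpace ℝ W2]
    [NormedAddCommGroup W1'] [NormedSpace ℝ W1']
    [NormedAddCommGroup W2'] [NormedSpace ℝ W2']
    (a1 : W1 →ₗ[ℝ] W1' →ₗ[ℝ] ℝ) (a2 : W2 →ₗ[ℝ] W2' →ₗ[ℝ] ℝ)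
    (ι1 : W1 →L[ℝ] W1') (ι2 : W2 →L[ℝ] W2')
    (F1 : Z →L[ℝ] W1) (F2 : Z →L[ℝ] W2)
    (T1 : W1 →L[ℝ] Z) (T2 : W2 →L[ℝ] Z)
    (hT1 : ∀ η : Z, T1 (F1 η) = η) (hT2 : ∀ η : Z, T2 (F2 η) = η)
    (N1 : W1 → ℝ) (N2 : W2 → ℝ)
    (hN1 : ∀ u : W1, 0 ≤ N1 u) (hN2 : ∀ u : W2, 0 ≤ N2 u)
    {Ca c' CF : ℝ} (hCa : 0 < Ca) (hc' : 0 < c') (hCF : 0 < CF)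
    (hbd1 : ∀ (u : W1) (v : W1'), |a1 u v| ≤ Ca * ‖u‖ * ‖v‖)
    (hbd2 : ∀ (u : W2) (v : W2'), |a2 u v| ≤ Ca * ‖u‖ * ‖v‖)
    (hcoer1 : ∀ u : W1, c' * (N1 u) ^ 2 ≤ a1 u (ι1 u))
    (hcoer2 : ∀ u : W2, c' * (N2 u) ^ 2 ≤ a2 u (ι2 u))
    (hF1 : ∀ η : Z, ‖F1 η‖ ≤ CF * N1 (F1 η))
    (hF2 : ∀ η : Z, ‖F2 η‖ ≤ CF * N2 (F2 η)) :
    (∃ C : ℝ, 0 < C ∧ ∀ η μ : Z,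
        |a1 (F1 η) (ι1 (F1 μ))| ≤ C * ‖η‖ * ‖μ‖ ∧
        |a2 (F2 η) (ι2 (F2 μ))| ≤ C * ‖η‖ * ‖μ‖) ∧
    (∃ c : ℝ, 0 < c ∧ ∀ η : Z,
        c * ‖η‖ ^ 2 ≤ a1 (F1 η) (ι1 (F1 η)) ∧
        c * ‖η‖ ^ 2 ≤ a2 (F2 η) (ι2 (F2 η))) ∧
    (∀ χ : Z →L[ℝ] ℝ,
        (∃! η : Z, ∀ μ : Z, a1 (F1 η) (ι1 (F1 μ)) = χ μ) ∧
        (∃! η : Z, ∀ μ : Z, a2 (F2 η) (ι2 (F2 μ)) = χ μ) ∧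
        (∃! η : Z, ∀ μ : Z, a1 (F1 η) (ι1 (F1 μ)) + a2 (F2 η) (ι2 (F2 μ)) = χ μ)) :=
  stmt_15_general a1 a2 ι1 ι2 F1 F2 T1 T2 hT1 hT2 N1 N2 hc' hCF hbd1 hbd2 hcoer1 hcoer2 hF1 hF2
end

section
/- Convergence of the Robin–Robin/Peaceman–Rachford iteration in the interface norm: let 𝒮₁, 𝒮₂ be the unbounded monotone operators on L²_Γ with (𝒮_iη − 𝒮_iμ, η−μ) ≥ c‖η−μ‖²_Z, let η ∈ D(𝒮₁) ∩ D(𝒮₂) solve (𝒮₁+𝒮₂)η = 0, and let (η₁ⁿ, η₂ⁿ) be the Peaceman–Rachford iterates: (s₀I+𝒮₁)η₁ⁿ = (s₀I−𝒮₂)η₂ⁿ⁻¹, (s₀I+𝒮₂)η₂ⁿ = (s₀I−𝒮₁)η₁ⁿ, with s₀ > 0 and η₂⁰ ∈ D(𝒮₂). If (𝒮_iη_iⁿ − 𝒮_iη, η_iⁿ − η)_{L²_Γ} → 0 as n → ∞, then ‖η₁ⁿ − η‖_Z + ‖η₂ⁿ − η‖_Z → 0. -/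
open Filter Topology

theorem tendsto_zero_of_mul_sq_le {α : Type*} {l : Filter α} {f g : α → ℝ} {c : ℝ} (hc : 0 < c)
    (hf : ∀ a, 0 ≤ f a) (hle : ∀ a, c * f a ^ 2 ≤ g a) (hg : Tendsto g l (𝓝 0)) :
    Tendsto f l (𝓝 0) :=
  squeeze_zero hf
    (fun a => (le_abs_self _).trans (Real.abs_le_sqrt ((le_div_iff₀' hc).2 (hle a))))
    (by simpa using (hg.div_const c).sqrt)

theorem tendsto_norm_sub_of_pairing_tendsto_zero {α Z H : Type*} {l : Filter α}
    [SeminormedAddCommGroup Z] [NormedAddCommGroup H] [InnerProductSpace ℝ H]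
    {ι : Z → H} {D : Set H} {S : H → H} {c : ℝ} (hc : 0 < c)
    (hmono : ∀ ξ ζ : Z, ι ξ ∈ D → ι ζ ∈ D →
      c * ‖ξ - ζ‖ ^ 2 ≤ (inner ℝ (S (ι ξ) - S (ι ζ)) (ι ξ - ι ζ) : ℝ))
    {η : Z} (hη : ι η ∈ D) {u : α → Z} (hu : ∀ a, ι (u a) ∈ D)
    (hlim : Tendsto (fun a => (inner ℝ (S (ι (u a)) - S (ι η)) (ι (u a) - ι η) : ℝ)) l (𝓝 0)) :
    Tendsto (fun a => ‖u a - η‖) l (𝓝 0) :=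
  tendsto_zero_of_mul_sq_le hc (fun _ => norm_nonneg _) (fun a => hmono _ _ (hu a) hη) hlim

theorem stmt_18_general {Z L2Γ : Type*}
    [NormedAddCommGroup Z] [NormedSpace ℝ Z]
    [NormedAddCommGroup L2Γ] [InnerProductSpace ℝ L2Γ]
    (ι : Z →L[ℝ] L2Γ)
    (D1 D2 : Set L2Γ) (S1 S2 : L2Γ → L2Γ)
    {c : ℝ} (hc : 0 < c)
    (hmono1 : ∀ ξ ζ : Z, ι ξ ∈ D1 → ι ζ ∈ D1 →
      c * ‖ξ - ζ‖ ^ 2 ≤ (inner ℝ (S1 (ι ξ) - S1 (ι ζ)) (ι ξ - ι ζ) : ℝ))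
    (hmono2 : ∀ ξ ζ : Z, ι ξ ∈ D2 → ι ζ ∈ D2 →
      c * ‖ξ - ζ‖ ^ 2 ≤ (inner ℝ (S2 (ι ξ) - S2 (ι ζ)) (ι ξ - ι ζ) : ℝ))
    (η : Z) (hη1 : ι η ∈ D1) (hη2 : ι η ∈ D2)
    (η1 η2 : ℕ → Z)
    (hd1 : ∀ n, ι (η1 n) ∈ D1) (hd2 : ∀ n, ι (η2 n) ∈ D2)
    (hlim1 : Tendsto (fun n : ℕ =>
        (inner ℝ (S1 (ι (η1 n)) - S1 (ι η)) (ι (η1 n) - ι η) : ℝ)) atTop (nhds 0))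
    (hlim2 : Tendsto (fun n : ℕ =>
        (inner ℝ (S2 (ι (η2 n)) - S2 (ι η)) (ι (η2 n) - ι η) : ℝ)) atTop (nhds 0)) :
    Tendsto (fun n : ℕ => ‖η1 n - η‖ + ‖η2 n - η‖) atTop (nhds 0) := by
  have h1 := tendsto_norm_sub_of_pairing_tendsto_zero hc hmono1 hη1 hd1 hlim1
  have h2 := tendsto_norm_sub_of_pairing_tendsto_zero hc hmono2 hη2 hd2 hlim2
  simpa using h1.add h2

/-- Convergence of the Robin–Robin/Peaceman–Rachford iteration in the
interface norm.  `Z ↪ L²_Γ` is a continuous dense embedding, `𝒮₁, 𝒮₂` are (affine) operators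
on `L²_Γ` with domains `D₁, D₂ ⊆ range ι`, strongly monotone with respect to the stronger
`Z`-norm; `η` solves `(𝒮₁+𝒮₂)η = 0`, and `(η₁ⁿ, η₂ⁿ)` are the Peaceman–Rachford iterates
with parameter `s₀ > 0`.  If the monotonicity pairings
`(𝒮_iη_iⁿ − 𝒮_iη, η_iⁿ − η)_{L²_Γ}` tend to `0`, then
`‖η₁ⁿ − η‖_Z + ‖η₂ⁿ − η‖_Z → 0`. -/
theorem stmt_18 {Z L2Γ : Type*}
    [NormedAddCommGroup Z] [NormedSpace ℝ Z]
    [NormedAddCommGroup L2Γ] [InnerProductSpace ℝ L2Γ]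
    (ι : Z →L[ℝ] L2Γ) (hinj : Function.Injective ι) (hdense : DenseRange ι)
    (D1 D2 : Set L2Γ) (S1 S2 : L2Γ → L2Γ)
    {c : ℝ} (hc : 0 < c)
    (hmono1 : ∀ ξ ζ : Z, ι ξ ∈ D1 → ι ζ ∈ D1 →
      c * ‖ξ - ζ‖ ^ 2 ≤ (inner ℝ (S1 (ι ξ) - S1 (ι ζ)) (ι ξ - ι ζ) : ℝ))
    (hmono2 : ∀ ξ ζ : Z, ι ξ ∈ D2 → ι ζ ∈ D2 →
      c * ‖ξ - ζ‖ ^ 2 ≤ (inner ℝ (S2 (ι ξ) - S2 (ι ζ)) (ι ξ - ι ζ) : ℝ))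
    (η : Z) (hη1 : ι η ∈ D1) (hη2 : ι η ∈ D2)
    (hsol : S1 (ι η) + S2 (ι η) = 0)
    (s₀ : ℝ) (hs₀ : 0 < s₀)
    (η1 η2 : ℕ → Z)
    (hd1 : ∀ n, ι (η1 n) ∈ D1) (hd2 : ∀ n, ι (η2 n) ∈ D2)
    (hit1 : ∀ n : ℕ,
      s₀ • ι (η1 (n + 1)) + S1 (ι (η1 (n + 1))) = s₀ • ι (η2 n) - S2 (ι (η2 n)))
    (hit2 : ∀ n : ℕ,
      s₀ • ι (η2 (n + 1)) + S2 (ι (η2 (n + 1))) = s₀ • ι (η1 (n + 1)) - S1 (ι (η1 (n + 1))))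
    (hlim1 : Tendsto (fun n : ℕ =>
        (inner ℝ (S1 (ι (η1 n)) - S1 (ι η)) (ι (η1 n) - ι η) : ℝ)) atTop (nhds 0))
    (hlim2 : Tendsto (fun n : ℕ =>
        (inner ℝ (S2 (ι (η2 n)) - S2 (ι η)) (ι (η2 n) - ι η) : ℝ)) atTop (nhds 0)) :
    Tendsto (fun n : ℕ => ‖η1 n - η‖ + ‖η2 n - η‖) atTop (nhds 0) :=
  stmt_18_general ι D1 D2 S1 S2 hc hmono1 hmono2 η hη1 hη2 η1 η2 hd1 hd2 hlim1 hlim2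
end

section
/- Equivalence between the Steklov–Poincaré equation and the transmission problem: if (u₁,u₂) ∈ W₁×W₂ solves the transmission problem (subdomain equations a_i(u_i,v_i)=⟨f_i,v_i⟩ for v_i ∈ W̃_i⁰, trace matching T₁u₁ = T₂u₂, and flux matching Σ_i a_i(u_i,F_iμ) − ⟨f_i,F_iμ⟩ = 0 for all μ ∈ Z), then η = T_iu_i solves Sη = χ in Z*. Conversely, if η ∈ Z solves Sη = χ, then (F₁η + G₁f₁, F₂η + G₂f₂) solves the transmission problem. -/
/-!
Uniqueness of the subdomain solves gives `u_i = F_i (T_i u_i) + G_i f_i` for every subdomain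
solution. On such a lift of `η` the flux residual `a_i(u_i, F_iμ) − ⟨f_i, F_iμ⟩` equals
`⟨S_iη, μ⟩ − ⟨χ_i, μ⟩`, so flux matching for the lifts is exactly `Sη = χ`.
-/

section Subdomain

variable {R Z W W' W₀ : Type*} [CommRing R] [AddCommGroup Z] [Module R Z]
  [AddCommGroup W] [Module R W] [AddCommGroup W'] [Module R W'] [AddCommGroup W₀] [Module R W₀]
  {a : W →ₗ[R] W' →ₗ[R] R} {f : W' →ₗ[R] R} {e : W₀ →ₗ[R] W'} {T : W →ₗ[R] Z} {F : Z →ₗ[R] W}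
  {g : W}

theorem solves_lift_add (hFhom : ∀ (η : Z) (v : W₀), a (F η) (e v) = 0)
    (hg : ∀ v : W₀, a g (e v) = f (e v)) (η : Z) (v : W₀) :
    a (F η + g) (e v) = f (e v) := by
  rw [map_add, LinearMap.add_apply, hFhom, hg, zero_add]

theorem trace_lift_add (hFT : ∀ η : Z, T (F η) = η) (hgT : T g = 0) (η : Z) :
    T (F η + g) = η := by
  rw [map_add, hFT, hgT, add_zero]

theorem eq_lift_trace_add (hFT : ∀ η : Z, T (F η) = η)
    (hFhom : ∀ (η : Z) (v : W₀), a (F η) (e v) = 0)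
    (hg : ∀ v : W₀, a g (e v) = f (e v)) (hgT : T g = 0)
    (huniq : ∀ u u' : W, (∀ v : W₀, a u (e v) = a u' (e v)) → T u = T u' → u = u')
    {u : W} (hu : ∀ v : W₀, a u (e v) = f (e v)) :
    u = F (T u) + g :=
  huniq _ _ (fun v => by rw [hu, solves_lift_add hFhom hg]) (trace_lift_add hFT hgT _).symm

theorem residual_lift_add (η : Z) (w : W') :
    a (F η + g) w - f w = a (F η) w - (f w - a g w) := by
  rw [map_add, LinearMap.add_apply]
  ring

end Subdomain

/-- `ι_i : W_i → W̃_i` embeds trial into test functions, `e_i : W̃_i⁰ → W̃_i` embeds the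
zero-trace test functions. -/
theorem stmt_19 {Z W1 W2 W1' W2' W10' W20' : Type*}
    [AddCommGroup Z] [Module ℝ Z]
    [AddCommGroup W1] [Module ℝ W1] [AddCommGroup W2] [Module ℝ W2]
    [AddCommGroup W1'] [Module ℝ W1'] [AddCommGroup W2'] [Module ℝ W2']
    [AddCommGroup W10'] [Module ℝ W10'] [AddCommGroup W20'] [Module ℝ W20']
    (a1 : W1 →ₗ[ℝ] W1' →ₗ[ℝ] ℝ) (a2 : W2 →ₗ[ℝ] W2' →ₗ[ℝ] ℝ)
    (f1 : W1' →ₗ[ℝ] ℝ) (f2 : W2' →ₗ[ℝ] ℝ)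
    (ι1 : W1 →ₗ[ℝ] W1') (ι2 : W2 →ₗ[ℝ] W2')
    (e1 : W10' →ₗ[ℝ] W1') (e2 : W20' →ₗ[ℝ] W2')
    (T1 : W1 →ₗ[ℝ] Z) (T2 : W2 →ₗ[ℝ] Z)
    (F1 : Z →ₗ[ℝ] W1) (F2 : Z →ₗ[ℝ] W2)
    (g1 : W1) (g2 : W2)          -- `g_i = G_i f_i`
    (hF1T : ∀ η : Z, T1 (F1 η) = η) (hF2T : ∀ η : Z, T2 (F2 η) = η)
    (hF1hom : ∀ (η : Z) (v : W10'), a1 (F1 η) (e1 v) = 0)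
    (hF2hom : ∀ (η : Z) (v : W20'), a2 (F2 η) (e2 v) = 0)
    (hg1 : ∀ v : W10', a1 g1 (e1 v) = f1 (e1 v))
    (hg2 : ∀ v : W20', a2 g2 (e2 v) = f2 (e2 v))
    (hg1T : T1 g1 = 0) (hg2T : T2 g2 = 0)
    (huniq1 : ∀ u u' : W1,
      (∀ v : W10', a1 u (e1 v) = a1 u' (e1 v)) → T1 u = T1 u' → u = u')
    (huniq2 : ∀ u u' : W2,
      (∀ v : W20', a2 u (e2 v) = a2 u' (e2 v)) → T2 u = T2 u' → u = u') :
    (∀ (u1 : W1) (u2 : W2),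
      (∀ v : W10', a1 u1 (e1 v) = f1 (e1 v)) →
      (∀ v : W20', a2 u2 (e2 v) = f2 (e2 v)) →
      T1 u1 = T2 u2 →
      (∀ μ : Z, (a1 u1 (ι1 (F1 μ)) - f1 (ι1 (F1 μ))) +
                (a2 u2 (ι2 (F2 μ)) - f2 (ι2 (F2 μ))) = 0) →
      ∀ μ : Z,
        a1 (F1 (T1 u1)) (ι1 (F1 μ)) + a2 (F2 (T1 u1)) (ι2 (F2 μ))
          = (f1 (ι1 (F1 μ)) - a1 g1 (ι1 (F1 μ))) +
            (f2 (ι2 (F2 μ)) - a2 g2 (ι2 (F2 μ)))) ∧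
    (∀ η : Z,
      (∀ μ : Z,
        a1 (F1 η) (ι1 (F1 μ)) + a2 (F2 η) (ι2 (F2 μ))
          = (f1 (ι1 (F1 μ)) - a1 g1 (ι1 (F1 μ))) +
            (f2 (ι2 (F2 μ)) - a2 g2 (ι2 (F2 μ)))) →
      ((∀ v : W10', a1 (F1 η + g1) (e1 v) = f1 (e1 v)) ∧
       (∀ v : W20', a2 (F2 η + g2) (e2 v) = f2 (e2 v)) ∧
       T1 (F1 η + g1) = T2 (F2 η + g2) ∧
       (∀ μ : Z, (a1 (F1 η + g1) (ι1 (F1 μ)) - f1 (ι1 (F1 μ))) +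
                 (a2 (F2 η + g2) (ι2 (F2 μ)) - f2 (ι2 (F2 μ))) = 0))) := by
  refine ⟨fun u1 u2 h1 h2 hT hflux μ => ?_, fun η hη => ?_⟩
  · obtain ⟨η, hη⟩ : ∃ η, T1 u1 = η := ⟨_, rfl⟩
    have hu1 : u1 = F1 η + g1 := hη ▸ eq_lift_trace_add hF1T hF1hom hg1 hg1T huniq1 h1
    have hu2 : u2 = F2 η + g2 := hη ▸ hT ▸ eq_lift_trace_add hF2T hF2hom hg2 hg2T huniq2 h2
    have hSχ := hflux μ
    rw [hu1, hu2, residual_lift_add, residual_lift_add] at hSχ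
    rw [hη]
    linear_combination hSχ
  · refine ⟨solves_lift_add hF1hom hg1 η, solves_lift_add hF2hom hg2 η,
      by rw [trace_lift_add hF1T hg1T, trace_lift_add hF2T hg2T], fun μ => ?_⟩
    rw [residual_lift_add, residual_lift_add]
    linear_combination hη μ
end
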